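/- arXiv:2502.10385 — 3 statements merged into one kernel-verified Lean document; each statement's English description precedes it below -/
import Mathlib

section
/- Let d, n be positive integers and ε > 0. Define the coding rate R_ε(Γ) := (1/2)·log det(I + (d/ε²)·Γ) for symmetric positive semidefinite Γ ∈ ℝ^{d×d}. Then for every matrix Z ∈ ℝ^{d×n} all of whose columns have unit ℓ²-norm, the gradient (with respect to the Frobenius inner product on ℝ^{d×n}) of the map Z ↦ R_ε(ZZᵀ/n) satisfies ‖∇_Z R_ε(ZZᵀ/n)‖_F ≤ √(d·min{d,n}/n)/(2ε). -/
/-!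
The gradient is `G = α (1 + α Z Zᵀ)⁻¹ Z` with `α = d / (n ε²)`, by Jacobi's formula
`d (log det) A = tr (A⁻¹ ·)`. For `S ⪰ 0` and `A = 1 + α S` the identity
`(1 - α S)² = A² - 4 α S` gives `α² A⁻¹ S A⁻¹ ⪯ (α / 4) 1`, hence
`‖G‖_F² = α² tr (A⁻¹ Z Zᵀ A⁻¹) ≤ α d / 4`. The push-through identity
`(1 + α Z Zᵀ)⁻¹ Z = Z (1 + α Zᵀ Z)⁻¹` turns the same estimate for `Zᵀ` into `‖G‖_F² ≤ α n / 4`.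
-/

open Matrix

attribute [local instance] Matrix.normedAddCommGroup Matrix.normedSpace

/-- Frobenius norm of a real matrix: `‖A‖_F = √(tr (Aᵀ A))`. -/
noncomputable def frobNorm {d n : ℕ} (A : Matrix (Fin d) (Fin n) ℝ) : ℝ :=
  Real.sqrt ((Aᵀ * A).trace)

open scoped MatrixOrder

variable {m n : Type*} [Fintype m] [Fintype n]

-- `HasFDerivAt f (frobeniusPairing G) Z` says that `G` is the gradient of `f` at `Z`.
noncomputable def frobeniusPairing (G : Matrix m n ℝ) : Matrix m n ℝ →L[ℝ] ℝ :=
  (traceLinearMap n ℝ ℝ ∘ₗ mulLeftLinearMap n ℝ Gᵀ).toContinuousLinearMap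

@[simp]
theorem frobeniusPairing_apply (G H : Matrix m n ℝ) : frobeniusPairing G H = (Gᵀ * H).trace :=
  rfl

theorem frobeniusPairing_injective : Function.Injective (frobeniusPairing : Matrix m n ℝ → _) :=
  fun G G' h => transpose_injective <| ext_iff_trace_mul_right.2 fun H => by
    simpa using congr($h H)

theorem hasFDerivAt_mul_transpose (Z : Matrix m n ℝ) :
    HasFDerivAt (fun W : Matrix m n ℝ => W * Wᵀ)
      (mulRightLinearMap m ℝ Zᵀ +
        mulLeftLinearMap m ℝ Z ∘ₗ (transposeLinearEquiv m n ℝ ℝ).toLinearMap).toContinuousLinearMap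
      Z := by
  have hT := (transposeLinearEquiv m n ℝ ℝ).toLinearMap.toContinuousLinearMap.hasFDerivAt (x := Z)
  refine ((mulLinearMap ℝ).toContinuousBilinearMap.hasFDerivAt_of_bilinear (hasFDerivAt_id Z)
    hT).congr_fderiv (ContinuousLinearMap.ext fun (H : Matrix m n ℝ) => ?_)
  change Z * Hᵀ + H * Zᵀ = H * Zᵀ + Z * Hᵀ
  exact add_comm _ _

variable [DecidableEq m]

theorem Matrix.sum_det_updateRow {R : Type*} [CommRing R] (A H : Matrix m m R) :
    ∑ i, (A.updateRow i (H i)).det = (A.adjugate * H).trace := by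
  simp only [← cramer_transpose_apply, cramer_eq_adjugate_mulVec, ← adjugate_transpose, trace,
    diag, mul_apply, mulVec, dotProduct, transpose_apply]
  exact Finset.sum_comm

noncomputable def Matrix.detContinuousMultilinearMap :
    ContinuousMultilinearMap ℝ (fun _ : m => m → ℝ) ℝ :=
  ⟨(detRowAlternating (R := ℝ) (n := m)).toMultilinearMap, continuous_id.matrix_det⟩

theorem Matrix.hasFDerivAt_det (A : Matrix m m ℝ) :
    HasFDerivAt det (frobeniusPairing A.adjugateᵀ) A := by
  refine (detContinuousMultilinearMap.hasFDerivAt A).congr_fderiv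
    (ContinuousLinearMap.ext fun (H : Matrix m m ℝ) => ?_)
  -- `change`, not `rw`: the multilinear derivative is stated on `m → m → ℝ`, not on matrices.
  change _ = (A.adjugateᵀᵀ * H).trace
  rw [transpose_transpose, ← sum_det_updateRow]
  exact detContinuousMultilinearMap.linearDeriv_apply A H

theorem Matrix.hasFDerivAt_log_det {A : Matrix m m ℝ} (hA : A.det ≠ 0) :
    HasFDerivAt (fun M : Matrix m m ℝ => Real.log M.det) (frobeniusPairing A⁻¹ᵀ) A := by
  refine ((Real.hasDerivAt_log hA).comp_hasFDerivAt A (hasFDerivAt_det A)).congr_fderiv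
    (ContinuousLinearMap.ext fun H => ?_)
  change A.det⁻¹ * (A.adjugateᵀᵀ * H).trace = (A⁻¹ᵀᵀ * H).trace
  rw [inv_def, Ring.inverse_eq_inv', transpose_transpose, transpose_transpose, smul_mul,
    trace_smul, smul_eq_mul]

theorem transpose_inv_one_add_smul_mul_transpose (α : ℝ) (Z : Matrix m n ℝ) :
    (1 + α • (Z * Zᵀ))⁻¹ᵀ = (1 + α • (Z * Zᵀ))⁻¹ := by
  rw [transpose_nonsing_inv]
  simp [transpose_add, transpose_smul, transpose_mul]

theorem hasFDerivAt_half_log_det_one_add_smul_mul_transpose {α : ℝ} {Z : Matrix m n ℝ}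
    (hZ : (1 + α • (Z * Zᵀ)).det ≠ 0) :
    HasFDerivAt (fun W : Matrix m n ℝ => (1 / 2 : ℝ) * Real.log (1 + α • (W * Wᵀ)).det)
      (frobeniusPairing (α • ((1 + α • (Z * Zᵀ))⁻¹ * Z))) Z := by
  set A := 1 + α • (Z * Zᵀ)
  have hA : A⁻¹ᵀ = A⁻¹ := transpose_inv_one_add_smul_mul_transpose α Z
  have hg := ((hasFDerivAt_mul_transpose Z).const_smul α).const_add 1
  refine (((hasFDerivAt_log_det hZ).comp Z hg).const_mul (1 / 2)).congr_fderiv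
    (ContinuousLinearMap.ext fun (H : Matrix m n ℝ) => ?_)
  change 1 / 2 * (A⁻¹ᵀᵀ * (α • (H * Zᵀ + Z * Hᵀ))).trace = ((α • (A⁻¹ * Z))ᵀ * H).trace
  have h₁ : (A⁻¹ * (H * Zᵀ)).trace = (Zᵀ * A⁻¹ * H).trace := by
    rw [← Matrix.mul_assoc, trace_mul_cycle]
  have h₂ : (A⁻¹ * (Z * Hᵀ)).trace = (Zᵀ * A⁻¹ * H).trace := by
    rw [← trace_transpose]
    simp [transpose_mul, hA, Matrix.mul_assoc, trace_mul_comm H]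
  rw [transpose_transpose, Matrix.mul_smul, Matrix.mul_add, trace_smul, trace_add, h₁, h₂,
    transpose_smul, transpose_mul, hA, smul_mul, trace_smul, smul_eq_mul, smul_eq_mul]
  ring

omit [Fintype m] in
theorem Matrix.PosSemidef.posDef_one_add_smul {S : Matrix m m ℝ} (hS : S.PosSemidef) {α : ℝ}
    (hα : 0 ≤ α) : (1 + α • S).PosDef :=
  PosDef.one.add_posSemidef (hS.smul hα)

theorem Matrix.PosSemidef.sq_smul_inv_mul_mul_inv_le {S : Matrix m m ℝ} (hS : S.PosSemidef)
    {α : ℝ} (hα : 0 ≤ α) :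
    α ^ 2 • ((1 + α • S)⁻¹ * S * (1 + α • S)⁻¹) ≤ (α / 4) • (1 : Matrix m m ℝ) := by
  set A := 1 + α • S
  have hA : IsUnit A.det := isUnit_iff_ne_zero.2 (hS.posDef_one_add_smul hα).det_pos.ne'
  have hS_symm : Sᵀ = S := by simpa using hS.isHermitian.eq
  have hA_symm : A⁻¹ᵀ = A⁻¹ := by
    rw [transpose_nonsing_inv]
    simp [A, transpose_add, transpose_smul, hS_symm]
  have hsq : (1 - α • S) * (1 - α • S) = A * A - (4 * α) • S := by
    simp only [A, Matrix.mul_sub, Matrix.sub_mul, Matrix.mul_add, Matrix.add_mul,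
      Matrix.one_mul, Matrix.mul_one, Matrix.smul_mul, Matrix.mul_smul]
    module
  set B := A⁻¹ * (1 - α • S)
  have hB : B * Bᴴ = 1 - (4 * α) • (A⁻¹ * S * A⁻¹) := by
    have hB_T : Bᴴ = (1 - α • S) * A⁻¹ := by
      simp [B, conjTranspose_eq_transpose_of_trivial, transpose_mul, hA_symm, transpose_sub,
        transpose_smul, hS_symm]
    rw [hB_T, show B * ((1 - α • S) * A⁻¹) = A⁻¹ * ((1 - α • S) * (1 - α • S)) * A⁻¹ by
      simp only [B, Matrix.mul_assoc], hsq, Matrix.mul_sub, Matrix.sub_mul,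
      nonsing_inv_mul_cancel_left _ _ hA, mul_nonsing_inv _ hA, Matrix.mul_smul, Matrix.smul_mul]
  rw [le_iff, show (α / 4) • 1 - α ^ 2 • (A⁻¹ * S * A⁻¹) = (α / 4) • (B * Bᴴ) by rw [hB]; module]
  exact (posSemidef_self_mul_conjTranspose B).smul (by positivity)

theorem Matrix.PosSemidef.sq_mul_trace_inv_mul_mul_inv_le {S : Matrix m m ℝ} (hS : S.PosSemidef)
    {α : ℝ} (hα : 0 ≤ α) :
    α ^ 2 * ((1 + α • S)⁻¹ * S * (1 + α • S)⁻¹).trace ≤ α / 4 * Fintype.card m := by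
  simpa [trace_smul] using (tracePositiveLinearMap m ℝ ℝ).mono (hS.sq_smul_inv_mul_mul_inv_le hα)

theorem inv_one_add_smul_mul_transpose_mul [DecidableEq n] {α : ℝ} (hα : 0 ≤ α)
    (Z : Matrix m n ℝ) :
    (1 + α • (Z * Zᵀ))⁻¹ * Z = Z * (1 + α • (Zᵀ * Z))⁻¹ := by
  have hA : IsUnit (1 + α • (Z * Zᵀ)).det := isUnit_iff_ne_zero.2
    ((posSemidef_self_mul_conjTranspose Z).posDef_one_add_smul hα).det_pos.ne'
  have hC : IsUnit (1 + α • (Zᵀ * Z)).det := isUnit_iff_ne_zero.2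
    ((posSemidef_conjTranspose_mul_self Z).posDef_one_add_smul hα).det_pos.ne'
  have hcomm : (1 + α • (Z * Zᵀ)) * Z = Z * (1 + α • (Zᵀ * Z)) := by
    simp only [Matrix.add_mul, Matrix.mul_add, Matrix.one_mul, Matrix.mul_one, Matrix.smul_mul,
      Matrix.mul_smul, Matrix.mul_assoc]
  calc (1 + α • (Z * Zᵀ))⁻¹ * Z
      = (1 + α • (Z * Zᵀ))⁻¹ * (Z * (1 + α • (Zᵀ * Z))) * (1 + α • (Zᵀ * Z))⁻¹ := by
        rw [Matrix.mul_assoc, mul_nonsing_inv_cancel_right _ _ hC]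
    _ = Z * (1 + α • (Zᵀ * Z))⁻¹ := by
        rw [← hcomm, nonsing_inv_mul_cancel_left _ _ hA]

theorem sq_mul_trace_inv_one_add_smul_mul_transpose_mul_le {α : ℝ} (hα : 0 ≤ α)
    (Z : Matrix m n ℝ) :
    α ^ 2 * (((1 + α • (Z * Zᵀ))⁻¹ * Z)ᵀ * ((1 + α • (Z * Zᵀ))⁻¹ * Z)).trace ≤
      α / 4 * Fintype.card m := by
  have hS : (Z * Zᵀ).PosSemidef := posSemidef_self_mul_conjTranspose Z
  rw [transpose_mul, transpose_inv_one_add_smul_mul_transpose, trace_mul_comm,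
    ← Matrix.mul_assoc, Matrix.mul_assoc _ Z]
  exact hS.sq_mul_trace_inv_mul_mul_inv_le hα

theorem sq_mul_trace_inv_one_add_smul_mul_transpose_mul_le_min [DecidableEq n] {α : ℝ}
    (hα : 0 ≤ α) (Z : Matrix m n ℝ) :
    α ^ 2 * (((1 + α • (Z * Zᵀ))⁻¹ * Z)ᵀ * ((1 + α • (Z * Zᵀ))⁻¹ * Z)).trace ≤
      α / 4 * (min (Fintype.card m) (Fintype.card n) : ℕ) := by
  have hT : (1 + α • (Z * Zᵀ))⁻¹ * Z = ((1 + α • (Zᵀ * Zᵀᵀ))⁻¹ * Zᵀ)ᵀ := by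
    rw [transpose_mul, transpose_inv_one_add_smul_mul_transpose, transpose_transpose,
      inv_one_add_smul_mul_transpose_mul hα]
  rcases min_cases (Fintype.card m) (Fintype.card n) with ⟨h, -⟩ | ⟨h, -⟩ <;> rw [h]
  · exact sq_mul_trace_inv_one_add_smul_mul_transpose_mul_le hα Z
  · rw [hT, transpose_transpose, trace_mul_comm]
    exact sq_mul_trace_inv_one_add_smul_mul_transpose_mul_le hα Zᵀ

theorem stmt_0_general (d n : ℕ) (ε : ℝ) (hε : 0 < ε)
    (Z : Matrix (Fin d) (Fin n) ℝ)
    (G : Matrix (Fin d) (Fin n) ℝ)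
    (hG : ∀ H : Matrix (Fin d) (Fin n) ℝ,
      fderiv ℝ
        (fun W : Matrix (Fin d) (Fin n) ℝ =>
          (1 / 2 : ℝ) * Real.log ((1 + ((d : ℝ) / ε ^ 2) • ((n : ℝ)⁻¹ • (W * Wᵀ))).det))
        Z H = (Gᵀ * H).trace) :
    frobNorm G ≤ Real.sqrt ((d : ℝ) * ((min d n : ℕ) : ℝ) / (n : ℝ)) / (2 * ε) := by
  set α : ℝ := d / ε ^ 2 * (n : ℝ)⁻¹
  have hα : 0 ≤ α := by positivity
  simp only [smul_smul] at hG
  have hdet : (1 + α • (Z * Zᵀ)).det ≠ 0 :=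
    ((posSemidef_self_mul_conjTranspose Z).posDef_one_add_smul hα).det_pos.ne'
  obtain rfl : G = α • ((1 + α • (Z * Zᵀ))⁻¹ * Z) := frobeniusPairing_injective <|
    (ContinuousLinearMap.ext fun H => (hG H).symm).trans
      (hasFDerivAt_half_log_det_one_add_smul_mul_transpose hdet).fderiv
  rw [frobNorm, Real.sqrt_le_iff]
  refine ⟨by positivity, ?_⟩
  calc _ = α ^ 2 * (((1 + α • (Z * Zᵀ))⁻¹ * Z)ᵀ * ((1 + α • (Z * Zᵀ))⁻¹ * Z)).trace := by
        rw [transpose_smul, smul_mul, Matrix.mul_smul, smul_smul, trace_smul, smul_eq_mul, sq]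
    _ ≤ α / 4 * (min d n : ℕ) := by
        simpa using sq_mul_trace_inv_one_add_smul_mul_transpose_mul_le_min hα Z
    _ = (Real.sqrt ((d : ℝ) * ((min d n : ℕ) : ℝ) / (n : ℝ)) / (2 * ε)) ^ 2 := by
        rw [div_pow, Real.sq_sqrt (by positivity)]
        ring

/-- For `Z ∈ ℝ^{d×n}` with unit-norm columns, the gradient `G` of
`Z ↦ R_ε(ZZᵀ/n)` (where `R_ε(Γ) = (1/2) log det (I + (d/ε²) Γ)`) satisfies
`‖G‖_F ≤ √(d · min{d,n} / n) / (2ε)`. -/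
theorem stmt_0 (d n : ℕ) (hd : 0 < d) (hn : 0 < n) (ε : ℝ) (hε : 0 < ε)
    (Z : Matrix (Fin d) (Fin n) ℝ)
    (hZ : ∀ j : Fin n, ∑ i : Fin d, (Z i j) ^ 2 = 1)
    (G : Matrix (Fin d) (Fin n) ℝ)
    (hG : ∀ H : Matrix (Fin d) (Fin n) ℝ,
      fderiv ℝ
        (fun W : Matrix (Fin d) (Fin n) ℝ =>
          (1 / 2 : ℝ) * Real.log ((1 + ((d : ℝ) / ε ^ 2) • ((n : ℝ)⁻¹ • (W * Wᵀ))).det))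
        Z H = (Gᵀ * H).trace) :
    frobNorm G ≤ Real.sqrt ((d : ℝ) * ((min d n : ℕ) : ℝ) / (n : ℝ)) / (2 * ε) :=
  stmt_0_general d n ε hε Z G hG
end

section
/- Let d, n be positive integers and α > 0. For every matrix Z ∈ ℝ^{d×n}, it holds that tr(Zᵀ(I + α·ZZᵀ)⁻²Z) ≤ min{d, n}/(4α). -/
/-! For `A = ZZᵀ` and `B = (1 + αA)⁻¹` one has `αAB = 1 - B`, hence `4α·BAB = 1 - (2B - 1)²`;
since `2B - 1` is symmetric, `4α·tr(Zᵀ B² Z) = 4α·tr(BAB) ≤ d`. The push-through identity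
`Zᵀ(1 + αZZᵀ)⁻¹ = (1 + αZᵀZ)⁻¹Zᵀ` rewrites the same trace with `ZᵀZ` in place of `ZZᵀ`, which
gives the bound `n / (4α)`. -/

open Matrix

namespace Matrix

lemma PosSemidef.posDef_one_add_smul_s7 {m : Type*} [DecidableEq m] {A : Matrix m m ℝ}
    (hA : A.PosSemidef) {α : ℝ} (hα : 0 ≤ α) : (1 + α • A).PosDef :=
  PosDef.one.add_posSemidef (hA.smul hα)

variable {m n : Type*} [Fintype m] [Fintype n] [DecidableEq m]

lemma PosSemidef.trace_inv_mul_mul_inv_le {A : Matrix m m ℝ} (hA : A.PosSemidef) {α : ℝ}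
    (hα : 0 ≤ α) :
    4 * α * ((1 + α • A)⁻¹ * A * (1 + α • A)⁻¹).trace ≤ Fintype.card m := by
  set S := 1 + α • A
  set B := S⁻¹
  have hS : S.PosDef := hA.posDef_one_add_smul_s7 hα
  have hSB : S * B = 1 := mul_nonsing_inv S hS.det_pos.ne'.isUnit
  have hB : B.IsHermitian := hS.isHermitian.inv
  have hAB : α • (A * B) = 1 - B := by
    rw [← smul_mul_assoc, show α • A = S - 1 from (add_sub_cancel_left 1 _).symm, sub_mul, hSB,
      one_mul]
  set C := (2 : ℝ) • B - 1
  have hsq : (4 * α) • (B * A * B) = 1 - C * C := by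
    rw [mul_assoc, ← smul_smul, ← mul_smul_comm, hAB]
    simp only [C, mul_sub, sub_mul, smul_mul_assoc, mul_smul_comm, mul_one, one_mul, smul_sub]
    module
  have hC : C.IsHermitian := (hB.smul (IsSelfAdjoint.of_nonneg zero_le_two)).sub isHermitian_one
  have hCC : 0 ≤ (C * C).trace := by
    simpa only [hC.eq] using (posSemidef_conjTranspose_mul_self C).trace_nonneg
  have h := congrArg trace hsq
  rw [trace_smul, trace_sub, trace_one, smul_eq_mul] at h
  linarith

lemma transpose_mul_inv_one_add_smul_mul_transpose [DecidableEq n] (Z : Matrix m n ℝ) {α : ℝ}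
    (hα : 0 ≤ α) :
    Zᵀ * (1 + α • (Z * Zᵀ))⁻¹ = (1 + α • (Zᵀ * Z))⁻¹ * Zᵀ := by
  set S := 1 + α • (Z * Zᵀ)
  set T := 1 + α • (Zᵀ * Z)
  have hS : IsUnit S.det :=
    ((posSemidef_self_mul_conjTranspose Z).posDef_one_add_smul_s7 hα).det_pos.ne'.isUnit
  have hT : IsUnit T.det :=
    ((posSemidef_conjTranspose_mul_self Z).posDef_one_add_smul_s7 hα).det_pos.ne'.isUnit
  have hZ : Zᵀ * S = T * Zᵀ := by
    simp only [S, T, Matrix.mul_add, Matrix.add_mul, Matrix.mul_one, Matrix.one_mul,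
      Matrix.mul_smul, Matrix.smul_mul, Matrix.mul_assoc]
  calc Zᵀ * S⁻¹
      = T⁻¹ * (T * Zᵀ * S⁻¹) := by rw [Matrix.mul_assoc, nonsing_inv_mul_cancel_left _ _ hT]
    _ = T⁻¹ * Zᵀ := by rw [← hZ, mul_nonsing_inv_cancel_right _ _ hS]

lemma trace_transpose_mul_inv_one_add_smul_sq_mul_le_card_left (Z : Matrix m n ℝ) {α : ℝ}
    (hα : 0 < α) :
    (Zᵀ * ((1 + α • (Z * Zᵀ))⁻¹) ^ 2 * Z).trace ≤ Fintype.card m / (4 * α) := by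
  set B := (1 + α • (Z * Zᵀ))⁻¹
  have htrace : (Zᵀ * B ^ 2 * Z).trace = (B * (Z * Zᵀ) * B).trace := by
    rw [trace_mul_comm, sq, ← Matrix.mul_assoc, ← Matrix.mul_assoc, trace_mul_comm]
    simp only [Matrix.mul_assoc]
  rw [htrace, le_div_iff₀' (by positivity)]
  exact (posSemidef_self_mul_conjTranspose Z).trace_inv_mul_mul_inv_le hα.le

lemma trace_transpose_mul_inv_one_add_smul_sq_mul_le_card_right [DecidableEq n]
    (Z : Matrix m n ℝ) {α : ℝ} (hα : 0 < α) :
    (Zᵀ * ((1 + α • (Z * Zᵀ))⁻¹) ^ 2 * Z).trace ≤ Fintype.card n / (4 * α) := by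
  set B := (1 + α • (Zᵀ * Z))⁻¹
  have htrace : (Zᵀ * ((1 + α • (Z * Zᵀ))⁻¹) ^ 2 * Z).trace = (B * (Zᵀ * Z) * B).trace := by
    rw [sq, ← Matrix.mul_assoc, transpose_mul_inv_one_add_smul_mul_transpose Z hα.le,
      Matrix.mul_assoc B, transpose_mul_inv_one_add_smul_mul_transpose Z hα.le,
      trace_mul_comm (B * _) B]
    simp only [B, Matrix.mul_assoc]
  rw [htrace, le_div_iff₀' (by positivity)]
  exact (posSemidef_conjTranspose_mul_self Z).trace_inv_mul_mul_inv_le hα.le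

end Matrix

theorem stmt_7_general (d n : ℕ) (α : ℝ) (hα : 0 < α)
    (Z : Matrix (Fin d) (Fin n) ℝ) :
    (Zᵀ * ((1 + α • (Z * Zᵀ))⁻¹) ^ 2 * Z).trace ≤ ((min d n : ℕ) : ℝ) / (4 * α) := by
  rw [Nat.cast_min, ← min_div_div_right (by positivity)]
  exact le_min (by simpa using Z.trace_transpose_mul_inv_one_add_smul_sq_mul_le_card_left hα)
    (by simpa using Z.trace_transpose_mul_inv_one_add_smul_sq_mul_le_card_right hα)

/-- For any `Z ∈ ℝ^{d×n}` and `α > 0`,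
`tr(Zᵀ (I + α ZZᵀ)⁻² Z) ≤ min{d,n}/(4α)`. -/
theorem stmt_7 (d n : ℕ) (hd : 0 < d) (hn : 0 < n) (α : ℝ) (hα : 0 < α)
    (Z : Matrix (Fin d) (Fin n) ℝ) :
    (Zᵀ * ((1 + α • (Z * Zᵀ))⁻¹) ^ 2 * Z).trace ≤ ((min d n : ℕ) : ℝ) / (4 * α) :=
  stmt_7_general d n α hα Z
end

section
/- Let d, n be positive integers and α > 0. For every matrix Z ∈ ℝ^{d×n}, the Frobenius norm of α·(I + α·ZZᵀ)⁻¹Z satisfies ‖α·(I + α·ZZᵀ)⁻¹Z‖_F ≤ (1/2)·√(α·min{d, n}). -/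
/-!
Let `S = 1 + α ZZᵀ` and `M = α S⁻¹ Z`, so `‖M‖_F² = tr (M Mᵀ) = α² tr (S⁻¹ ZZᵀ S⁻¹)`. Since
`(1 + αA)² = 4αA + (1 - αA)²`, the symmetric matrix `α² S⁻¹ A S⁻¹` is dominated by `(α/4) I`
for `A = ZZᵀ ⪰ 0` (the scalar inequality `αt/(1+αt)² ≤ 1/4`), whence `‖M‖_F² ≤ dα/4`.
The push-through identity `(1 + ZB)⁻¹ Z = Z (1 + BZ)⁻¹` shows that `Mᵀ` is the same
expression built from `Zᵀ`, which gives the bound `nα/4` as well.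
-/

open Matrix

namespace Matrix

section PushThrough

variable {m n R : Type*} [Fintype m] [Fintype n] [DecidableEq m] [DecidableEq n] [CommRing R]

/-- Valid without any invertibility hypothesis: by the Weinstein–Aronszajn identity either both
inverses are genuine or both are the junk value `0`. -/
theorem inv_one_add_mul_mul_eq_mul_inv_one_add_mul (A : Matrix m n R) (B : Matrix n m R) :
    (1 + A * B)⁻¹ * A = A * (1 + B * A)⁻¹ := by
  by_cases h : IsUnit (1 + A * B).det
  · have h' : IsUnit (1 + B * A).det := det_one_add_mul_comm A B ▸ h
    have hcomm : (1 + A * B) * A = A * (1 + B * A) := by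
      simp only [Matrix.add_mul, Matrix.mul_add, Matrix.one_mul, Matrix.mul_one, Matrix.mul_assoc]
    calc (1 + A * B)⁻¹ * A = (1 + A * B)⁻¹ * A * ((1 + B * A) * (1 + B * A)⁻¹) := by
          rw [mul_nonsing_inv _ h', Matrix.mul_one]
      _ = (1 + A * B)⁻¹ * ((1 + A * B) * A) * (1 + B * A)⁻¹ := by
          rw [hcomm]; simp only [Matrix.mul_assoc]
      _ = A * (1 + B * A)⁻¹ := by
          rw [← Matrix.mul_assoc (1 + A * B)⁻¹, nonsing_inv_mul _ h, Matrix.one_mul]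
  · have h' : ¬IsUnit (1 + B * A).det := det_one_add_mul_comm A B ▸ h
    rw [nonsing_inv_apply_not_isUnit _ h, nonsing_inv_apply_not_isUnit _ h', Matrix.zero_mul,
      Matrix.mul_zero]

theorem transpose_smul_inv_one_add_smul_mul_transpose_mul (α : R) (Z : Matrix m n R) :
    (α • ((1 + α • (Z * Zᵀ))⁻¹ * Z))ᵀ = α • ((1 + α • (Zᵀ * Z))⁻¹ * Zᵀ) := by
  have hsymm : (1 + α • (Z * Zᵀ))ᵀ = 1 + α • (Z * Zᵀ) := by
    rw [transpose_add, transpose_one, transpose_smul, transpose_mul, transpose_transpose]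
  have := inv_one_add_mul_mul_eq_mul_inv_one_add_mul Zᵀ (α • Z)
  rw [Matrix.mul_smul, Matrix.smul_mul] at this
  rw [transpose_smul, transpose_mul, transpose_nonsing_inv, hsymm, this]

end PushThrough

variable {m n : Type*} [Fintype m] [Fintype n] [DecidableEq m]

theorem trace_sq_smul_inv_one_add_smul_mul_mul_inv_le {A : Matrix m m ℝ} (hA : A.PosSemidef)
    {α : ℝ} (hα : 0 ≤ α) :
    (α ^ 2 • ((1 + α • A)⁻¹ * A * (1 + α • A)⁻¹)).trace ≤ Fintype.card m * (α / 4) := by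
  set S := 1 + α • A
  set E := S⁻¹
  set G := 1 - α • A
  have hS : IsUnit S.det := (PosDef.one.add_posSemidef (hA.smul hα)).det_pos.ne'.isUnit
  have hE : Eᴴ = E := by
    rw [conjTranspose_nonsing_inv, conjTranspose_add, conjTranspose_one, conjTranspose_smul,
      hA.1, star_trivial]
  have hG : Gᴴ = G := by
    rw [conjTranspose_sub, conjTranspose_one, conjTranspose_smul, hA.1, star_trivial]
  have hsq : (α / 4) • (S * S) = α ^ 2 • A + (α / 4) • (G * G) := by
    simp only [S, G, add_mul, mul_add, sub_mul, mul_sub, one_mul, mul_one, smul_smul,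
      smul_mul_assoc, mul_smul_comm, smul_sub, smul_add]
    module
  have hdecomp : α ^ 2 • (E * A * E) + (α / 4) • ((G * E)ᴴ * (G * E)) = (α / 4) • 1 := by
    rw [conjTranspose_mul, hE, hG]
    calc α ^ 2 • (E * A * E) + (α / 4) • (E * G * (G * E))
        = E * (α ^ 2 • A + (α / 4) • (G * G)) * E := by
          simp only [Matrix.mul_add, Matrix.add_mul, Matrix.mul_smul, Matrix.smul_mul,
            Matrix.mul_assoc]
      _ = (α / 4) • (E * S * (S * E)) := by
          rw [← hsq]
          simp only [Matrix.mul_smul, Matrix.smul_mul, Matrix.mul_assoc]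
      _ = (α / 4) • 1 := by rw [nonsing_inv_mul _ hS, mul_nonsing_inv _ hS, Matrix.one_mul]
  have hrest : 0 ≤ ((α / 4) • ((G * E)ᴴ * (G * E))).trace :=
    ((posSemidef_conjTranspose_mul_self _).smul (by positivity)).trace_nonneg
  have := congrArg trace hdecomp
  simp only [trace_add, trace_smul, trace_one, smul_eq_mul] at this hrest ⊢
  linarith

theorem trace_transpose_mul_self_smul_inv_one_add_smul_mul_transpose_mul_le (Z : Matrix m n ℝ)
    {α : ℝ} (hα : 0 ≤ α) :
    ((α • ((1 + α • (Z * Zᵀ))⁻¹ * Z))ᵀ * (α • ((1 + α • (Z * Zᵀ))⁻¹ * Z))).trace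
      ≤ Fintype.card m * (α / 4) := by
  set M := α • ((1 + α • (Z * Zᵀ))⁻¹ * Z)
  have hE : ((1 + α • (Z * Zᵀ))⁻¹)ᵀ = (1 + α • (Z * Zᵀ))⁻¹ := by
    rw [transpose_nonsing_inv, transpose_add, transpose_one, transpose_smul, transpose_mul,
      transpose_transpose]
  have hMM : M * Mᵀ = α ^ 2 • ((1 + α • (Z * Zᵀ))⁻¹ * (Z * Zᵀ) * (1 + α • (Z * Zᵀ))⁻¹) := by
    simp only [M, transpose_smul, transpose_mul, hE, Matrix.smul_mul, Matrix.mul_smul, smul_smul,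
      Matrix.mul_assoc, sq]
  rw [trace_mul_comm, hMM]
  exact trace_sq_smul_inv_one_add_smul_mul_mul_inv_le
    (by simpa using posSemidef_self_mul_conjTranspose Z) hα

end Matrix

theorem stmt_8_general (d n : ℕ) (α : ℝ) (hα : 0 < α)
    (Z : Matrix (Fin d) (Fin n) ℝ) :
    frobNorm (α • ((1 + α • (Z * Zᵀ))⁻¹ * Z))
      ≤ (1 / 2 : ℝ) * Real.sqrt (α * ((min d n : ℕ) : ℝ)) := by
  set M := α • ((1 + α • (Z * Zᵀ))⁻¹ * Z)
  have hle_d : (Mᵀ * M).trace ≤ d * (α / 4) := by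
    simpa only [Fintype.card_fin] using
      trace_transpose_mul_self_smul_inv_one_add_smul_mul_transpose_mul_le Z hα.le
  have hle_n : (Mᵀ * M).trace ≤ n * (α / 4) := by
    have := trace_transpose_mul_self_smul_inv_one_add_smul_mul_transpose_mul_le Zᵀ hα.le
    simp only [transpose_transpose] at this
    rw [← transpose_smul_inv_one_add_smul_mul_transpose_mul, transpose_transpose, trace_mul_comm,
      Fintype.card_fin] at this
    exact this
  have hmin : (Mᵀ * M).trace ≤ (1 / 2) ^ 2 * (α * ((min d n : ℕ) : ℝ)) := by
    rw [Nat.cast_min]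
    rcases min_cases (d : ℝ) n with ⟨h, -⟩ | ⟨h, -⟩ <;> rw [h] <;> linarith
  calc frobNorm M ≤ Real.sqrt ((1 / 2) ^ 2 * (α * ((min d n : ℕ) : ℝ))) := Real.sqrt_le_sqrt hmin
    _ = 1 / 2 * Real.sqrt (α * ((min d n : ℕ) : ℝ)) := by
      rw [Real.sqrt_mul (by positivity), Real.sqrt_sq (by norm_num)]

/-- For any `Z ∈ ℝ^{d×n}` and `α > 0`,
`‖α (I + α ZZᵀ)⁻¹ Z‖_F ≤ (1/2) √(α · min{d,n})`. -/
theorem stmt_8 (d n : ℕ) (hd : 0 < d) (hn : 0 < n) (α : ℝ) (hα : 0 < α)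
    (Z : Matrix (Fin d) (Fin n) ℝ) :
    frobNorm (α • ((1 + α • (Z * Zᵀ))⁻¹ * Z))
      ≤ (1 / 2 : ℝ) * Real.sqrt (α * ((min d n : ℕ) : ℝ)) :=
  stmt_8_general d n α hα Z
end
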